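/- arXiv:2010.11260 — 3 statements merged into one kernel-verified Lean document; each statement's English description precedes it below -/
import Mathlib

section
/- Let G be a connected finite simple graph with V vertices and E edges. Then G contains an independent set of cardinality at least ⌊(1/2)((2E + V + 1) - √((2E + V + 1)² - 4V²))⌋. -/
/-!
For `A ⊆ V` let `n = |A|`, `D` the degree sum and `c` the number of components of `G[A]`. By
induction on `A` there is an independent `s ⊆ A`, `k = |s|`, with `n² + k² ≤ k (D + n + c)`: put a
vertex `v` of minimum degree into `s` and recurse on `A` minus the closed neighbourhood `N` of `v`.
Every vertex of `N` has degree at least `|N| - 1`, so `D` drops by at least `|N| (|N| - 1) + X`,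
where `X` counts the edges between `N` and the rest, while `c` grows by at most `X - 1`. Hence
`D + n + c` drops by at least `|N|² + 1`, and `(n - |N| k)² ≥ 0` closes the induction. For `A = V`
and `G` connected the invariant reads `V² + k² ≤ k (2E + V + 1)`, and solving this quadratic
inequality in `k` gives the bound.
-/

open Finset

lemma Nat.add_sq_add_succ_sq_le {n k a S T : ℕ} (h : n ^ 2 + k ^ 2 ≤ k * S)
    (hST : S + a ^ 2 + 1 ≤ T) : (n + a) ^ 2 + (k + 1) ^ 2 ≤ (k + 1) * T := by
  rcases k.eq_zero_or_pos with rfl | hk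
  · obtain rfl : n = 0 := by simpa using h
    nlinarith
  · refine Nat.le_of_mul_le_mul_left ?_ hk
    zify at *
    nlinarith [sq_nonneg ((n : ℤ) - a * k)]

lemma Real.sub_sqrt_div_two_le_of_sq_add_le_mul {b c k : ℝ} (h : k ^ 2 + c ≤ b * k) :
    (b - √(b ^ 2 - 4 * c)) / 2 ≤ k := by
  have : |b - 2 * k| ≤ √(b ^ 2 - 4 * c) := Real.abs_le_sqrt (by nlinarith)
  linarith [le_abs_self (b - 2 * k)]

namespace SimpleGraph

variable {α : Type*} (G : SimpleGraph α) {A N : Finset α}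

/-- The induced graph `G[A]`, kept on the whole vertex type. -/
def onFinset (A : Finset α) : SimpleGraph α where
  Adj x y := x ∈ A ∧ y ∈ A ∧ G.Adj x y
  symm := ⟨fun _ _ h => ⟨h.2.1, h.1, h.2.2.symm⟩⟩
  loopless := ⟨fun x h => G.loopless.irrefl x h.2.2⟩

/-- The number of components of `G[A]`: the isolated vertices outside `A` are not counted. -/
noncomputable def componentCountIn (A : Finset α) : ℕ :=
  ((G.onFinset A).connectedComponentMk '' A).ncard

def degreeIn [DecidableRel G.Adj] (A : Finset α) (v : α) : ℕ := #{w ∈ A | G.Adj v w}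

lemma componentCountIn_eq_card_image (A : Finset α)
    [DecidableEq (G.onFinset A).ConnectedComponent] :
    G.componentCountIn A = #(A.image (G.onFinset A).connectedComponentMk) := by
  rw [componentCountIn, ← coe_image, Set.ncard_coe_finset]

lemma componentCountIn_univ [Fintype α] (hG : G.Connected) : G.componentCountIn univ = 1 := by
  have hconn : (G.onFinset univ).Connected :=
    hG.mono fun x y h => ⟨mem_univ x, mem_univ y, h⟩
  obtain ⟨v⟩ := hconn.nonempty
  refine Set.ncard_eq_one.2 ⟨(G.onFinset univ).connectedComponentMk v, ?_⟩
  rw [coe_univ, Set.image_univ]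
  refine Set.eq_singleton_iff_unique_mem.2 ⟨Set.mem_range_self v, ?_⟩
  rintro _ ⟨w, rfl⟩
  exact ConnectedComponent.sound (hconn.preconnected w v)

lemma card_filter_exists_adj_le_sum_degreeIn [DecidableRel G.Adj] (B C : Finset α) :
    #{x ∈ B | ∃ y ∈ C, G.Adj x y} ≤ ∑ x ∈ B, G.degreeIn C x := by
  rw [card_eq_sum_ones, sum_filter]
  refine sum_le_sum fun x _ => ?_
  split_ifs with hx
  · obtain ⟨y, hy, hxy⟩ := hx
    exact card_pos.2 ⟨y, mem_filter.2 ⟨hy, hxy⟩⟩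
  · exact Nat.zero_le _

variable {G} in
lemma mem_of_reachable_onFinset {w x : α} (hw : w ∈ A) (h : (G.onFinset A).Reachable w x) :
    x ∈ A := by
  obtain ⟨p⟩ := h.symm
  cases p with
  | nil => exact hw
  | cons hadj _ => exact hadj.1

lemma sum_degreeIn_univ [Fintype α] [DecidableRel G.Adj] :
    ∑ v, G.degreeIn univ v = 2 * #G.edgeFinset := by
  rw [← sum_degrees_eq_twice_card_edges]
  exact sum_congr rfl fun v _ => by rw [degree, neighborFinset_eq_filter, degreeIn]

variable [DecidableEq α]

variable {G} in
lemma reachable_onFinset_sdiff_of_reachable {w u : α} (hw : w ∈ A \ N)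
    (hclosed : ∀ x ∈ A \ N, (G.onFinset (A \ N)).Reachable w x → ∀ y ∈ N, ¬G.Adj x y)
    (h : (G.onFinset A).Reachable w u) : (G.onFinset (A \ N)).Reachable w u := by
  obtain ⟨p⟩ := h
  induction p with
  | nil => rfl
  | @cons w b u hadj _ ih =>
    obtain ⟨-, hbA, hwb⟩ := hadj
    have hb : b ∈ A \ N := mem_sdiff.2 ⟨hbA, fun hbN => hclosed w hw .rfl b hbN hwb⟩
    have hstep : (G.onFinset (A \ N)).Adj w b := ⟨hw, hb, hwb⟩
    exact hstep.reachable.trans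
      (ih hb fun x hx hbx => hclosed x hx (hstep.reachable.trans hbx))

lemma componentCountIn_sdiff_add_one_le [DecidableRel G.Adj] (hNA : N ⊆ A) (hN : N.Nonempty) :
    G.componentCountIn (A \ N) + 1 ≤
      G.componentCountIn A + #{x ∈ A \ N | ∃ y ∈ N, G.Adj x y} := by
  classical
  rw [componentCountIn_eq_card_image, componentCountIn_eq_card_image]
  obtain ⟨v, hv⟩ := hN
  set B := A \ N
  set T := {x ∈ B | ∃ y ∈ N, G.Adj x y}
  set mkA := (G.onFinset A).connectedComponentMk
  set mkB := (G.onFinset B).connectedComponentMk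
  set B₂ := {w ∈ B | ∀ x ∈ T, ¬(G.onFinset B).Reachable w x}
  have hclosed {w} (hw : w ∈ B₂) : ∀ x ∈ B, (G.onFinset B).Reachable w x → ∀ y ∈ N, ¬G.Adj x y :=
    fun x hx hwx y hy hxy => (mem_filter.1 hw).2 x (mem_filter.2 ⟨hx, y, hy, hxy⟩) hwx
  have hcover : B.image mkB ⊆ T.image mkB ∪ B₂.image mkB := by
    intro K hK
    obtain ⟨w, hw, rfl⟩ := mem_image.1 hK
    by_cases hwT : ∃ x ∈ T, (G.onFinset B).Reachable w x
    · obtain ⟨x, hx, hwx⟩ := hwT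
      exact mem_union_left _ (mem_image.2 ⟨x, hx, (ConnectedComponent.sound hwx).symm⟩)
    · push Not at hwT
      exact mem_union_right _ (mem_image_of_mem _ (mem_filter.2 ⟨hw, hwT⟩))
  have hle : G.onFinset B ≤ G.onFinset A := fun _ _ h =>
    ⟨(mem_sdiff.1 h.1).1, (mem_sdiff.1 h.2.1).1, h.2.2⟩
  -- Components of `G[B]` not meeting `T` are components of `G[A]`, and none of them contains `v`.
  have hB₂ : #(B₂.image mkB) ≤ #((A.image mkA).erase (mkA v)) := by
    refine card_le_card_of_injOn (ConnectedComponent.map (Hom.ofLE hle)) ?_ ?_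
    · intro K hK
      obtain ⟨w, hw, rfl⟩ := mem_image.1 (mem_coe.1 hK)
      have hwB := (mem_filter.1 hw).1
      refine mem_erase.2 ⟨fun hwv => ?_, mem_image_of_mem _ (mem_sdiff.1 hwB).1⟩
      have hvB := mem_of_reachable_onFinset hwB
        (reachable_onFinset_sdiff_of_reachable hwB (hclosed hw) (ConnectedComponent.exact hwv))
      exact (mem_sdiff.1 hvB).2 hv
    · intro K₁ hK₁ K₂ hK₂ hK
      obtain ⟨w₁, hw₁, rfl⟩ := mem_image.1 (mem_coe.1 hK₁)
      obtain ⟨w₂, -, rfl⟩ := mem_image.1 (mem_coe.1 hK₂)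
      exact ConnectedComponent.sound <| reachable_onFinset_sdiff_of_reachable
        (mem_filter.1 hw₁).1 (hclosed hw₁) (ConnectedComponent.exact hK)
  have hvA : mkA v ∈ A.image mkA := mem_image_of_mem _ (hNA hv)
  rw [card_erase_of_mem hvA] at hB₂
  calc #(B.image mkB) + 1 ≤ #(T.image mkB) + #(B₂.image mkB) + 1 := by
        grw [card_le_card hcover, card_union_le]
    _ ≤ #T + (#(A.image mkA) - 1) + 1 := by grw [card_image_le, hB₂]
    _ = #(A.image mkA) + #T := by have := card_pos.2 ⟨_, hvA⟩; omega

lemma sum_degreeIn_eq [DecidableRel G.Adj] (hNA : N ⊆ A) :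
    ∑ v ∈ A, G.degreeIn A v = ∑ v ∈ N, G.degreeIn A v + ∑ v ∈ A \ N, G.degreeIn (A \ N) v +
      ∑ v ∈ A \ N, G.degreeIn N v := by
  have hsplit (v : α) : G.degreeIn A v = G.degreeIn (A \ N) v + G.degreeIn N v := by
    rw [degreeIn, degreeIn, degreeIn, ← card_union_of_disjoint
      (disjoint_filter_filter sdiff_disjoint), ← filter_union, sdiff_union_of_subset hNA]
  rw [← union_sdiff_of_subset hNA, sum_union disjoint_sdiff, union_sdiff_of_subset hNA,
    add_assoc, ← sum_add_distrib]
  exact congrArg _ (sum_congr rfl fun v _ => hsplit v)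

variable [DecidableRel G.Adj]

variable {G} in
lemma sum_degreeIn_add_card_add_componentCountIn_sdiff_le (hNA : N ⊆ A) (hN : N.Nonempty)
    (hdeg : ∀ v ∈ N, #N ≤ G.degreeIn A v + 1) :
    ∑ v ∈ A \ N, G.degreeIn (A \ N) v + #(A \ N) + G.componentCountIn (A \ N) + #N ^ 2 + 1 ≤
      ∑ v ∈ A, G.degreeIn A v + #A + G.componentCountIn A := by
  have hsq : #N ^ 2 ≤ ∑ v ∈ N, G.degreeIn A v + #N := by
    have := card_nsmul_le_sum N (fun v => G.degreeIn A v + 1) _ hdeg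
    simpa only [smul_eq_mul, sum_add_distrib, sum_const, mul_one, sq] using this
  have hcomp := G.componentCountIn_sdiff_add_one_le hNA hN
  have hcross := G.card_filter_exists_adj_le_sum_degreeIn (A \ N) N
  rw [G.sum_degreeIn_eq hNA, ← card_sdiff_add_card_eq_card hNA]
  omega

theorem exists_isIndepSet_sq_add_sq_le (A : Finset α) :
    ∃ s ⊆ A, G.IsIndepSet (s : Set α) ∧
      #A ^ 2 + #s ^ 2 ≤ #s * (∑ v ∈ A, G.degreeIn A v + #A + G.componentCountIn A) := by
  induction A using Finset.strongInduction with | _ A ih =>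
  rcases A.eq_empty_or_nonempty with rfl | hA
  · exact ⟨∅, empty_subset _, by simp, by simp⟩
  obtain ⟨v, hvA, hvmin⟩ := A.exists_min_image (G.degreeIn A) hA
  set N := insert v {w ∈ A | G.Adj v w}
  have hNA : N ⊆ A := insert_subset hvA (filter_subset _ _)
  have hvN : v ∉ A \ N := fun h => (mem_sdiff.1 h).2 (mem_insert_self _ _)
  obtain ⟨s, hsA, hs, hbound⟩ :=
    ih (A \ N) ((ssubset_iff_of_subset sdiff_subset).2 ⟨v, hvA, hvN⟩)
  have hvs : ∀ w ∈ s, ¬G.Adj v w := fun w hw hvw =>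
    (mem_sdiff.1 (hsA hw)).2 (mem_insert_of_mem (mem_filter.2 ⟨(mem_sdiff.1 (hsA hw)).1, hvw⟩))
  refine ⟨insert v s, insert_subset hvA (hsA.trans sdiff_subset), ?_, ?_⟩
  · rw [coe_insert]
    exact hs.insert fun w hw _ => ⟨hvs w hw, fun hwv => hvs w hw hwv.symm⟩
  · have hcardN : #N = G.degreeIn A v + 1 := card_insert_of_notMem (by simp)
    have hdrop := sum_degreeIn_add_card_add_componentCountIn_sdiff_le hNA ⟨v, mem_insert_self _ _⟩
      fun w hw => hcardN ▸ Nat.add_le_add_right (hvmin w (hNA hw)) 1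
    rw [card_insert_of_notMem fun h => hvN (hsA h)]
    simpa only [card_sdiff_add_card_eq_card hNA] using Nat.add_sq_add_succ_sq_le hbound hdrop

end SimpleGraph

/-- Harant–Schiermeyer: a connected finite simple graph with `V` vertices and `E`
edges contains an independent set of cardinality at least
`⌊((2E + V + 1) - √((2E + V + 1)² - 4V²))/2⌋`. -/
theorem independent_set_lower_bound {α : Type*} [Fintype α] [DecidableEq α]
    (G : SimpleGraph α) [DecidableRel G.Adj] (hconn : G.Connected) :
    ∃ s : Finset α, (∀ x ∈ s, ∀ y ∈ s, ¬ G.Adj x y) ∧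
      ⌊((2 * (G.edgeFinset.card : ℝ) + (Fintype.card α : ℝ) + 1)
          - Real.sqrt ((2 * (G.edgeFinset.card : ℝ) + (Fintype.card α : ℝ) + 1) ^ 2
              - 4 * (Fintype.card α : ℝ) ^ 2)) / 2⌋ ≤ (s.card : ℤ) := by
  obtain ⟨s, -, hs, hbound⟩ := G.exists_isIndepSet_sq_add_sq_le univ
  refine ⟨s, fun x hx y hy hxy => hs hx hy hxy.ne hxy, ?_⟩
  rw [G.sum_degreeIn_univ, G.componentCountIn_univ hconn, card_univ] at hbound
  have hreal : (#s : ℝ) ^ 2 + (Fintype.card α : ℝ) ^ 2 ≤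
      (2 * #G.edgeFinset + Fintype.card α + 1) * #s := by
    exact_mod_cast (by linarith : #s ^ 2 + Fintype.card α ^ 2 ≤
      (2 * #G.edgeFinset + Fintype.card α + 1) * #s)
  exact (Int.floor_le_floor (Real.sub_sqrt_div_two_le_of_sq_add_le_mul hreal)).trans_eq
    (Int.floor_natCast _)
end

section
/- Let (X, d) be a metric space, let z, w ∈ X, and let P be a geodesic from z to w. Suppose 0 ≤ t < t' < s ≤ d(z, w). Then the number of geodesics from P(t) to P(s) is at least the number of geodesics from P(t') to P(s); more precisely, there is an injection from the set of geodesics from P(t') to P(s) into the set of geodesics from P(t) to P(s). -/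
/-!
Follow `P` from `t` to `t'` and then an arbitrary geodesic `Q` from `P t'` to `P s`. Because
`d(P t, P t') + d(P t', P s) = d(P t, P s)`, this concatenation is again a geodesic: distances
between points on different pieces are bounded above by the triangle inequality through the
junction and below by the one through the two endpoints. Since `Q` can be read off from the
concatenation, the map `Q ↦ concatenation` is injective.
-/

/-- `P` is a geodesic from `x` to `y` in a metric space: a path defined on
`[0, dist x y]` with `P 0 = x`, `P (dist x y) = y`, and
`dist (P s) (P t) = |s - t|` for all `s, t` in the domain. -/
def IsGeodesic {X : Type*} [MetricSpace X] (x y : X)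
    (P : Set.Icc (0 : ℝ) (dist x y) → X) : Prop :=
  P ⟨0, Set.left_mem_Icc.mpr dist_nonneg⟩ = x ∧
  P ⟨dist x y, Set.right_mem_Icc.mpr dist_nonneg⟩ = y ∧
  ∀ s t : Set.Icc (0 : ℝ) (dist x y), dist (P s) (P t) = |s.1 - t.1|

open Set

section IsometryRestrict

variable {α β : Type*} [PseudoMetricSpace α] [PseudoMetricSpace β]

theorem isometry_domRestrict_iff {f : α → β} {s : Set α} :
    Isometry (s.domRestrict f) ↔ ∀ x ∈ s, ∀ y ∈ s, dist (f x) (f y) = dist x y := by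
  rw [isometry_iff_dist_eq]
  exact ⟨fun h x hx y hy ↦ h ⟨x, hx⟩ ⟨y, hy⟩, fun h x y ↦ h x x.2 y y.2⟩

theorem Isometry.domRestrict_mono {f : α → β} {s t : Set α} (h : Isometry (t.domRestrict f))
    (hst : s ⊆ t) : Isometry (s.domRestrict f) :=
  isometry_domRestrict_iff.2 fun x hx y hy ↦ isometry_domRestrict_iff.1 h x (hst hx) y (hst hy)

theorem Isometry.domRestrict_congr {f g : α → β} {s : Set α} (h : Isometry (s.domRestrict f))
    (hfg : EqOn f g s) : Isometry (s.domRestrict g) :=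
  isometry_domRestrict_iff.2 fun x hx y hy ↦ by
    rw [← hfg hx, ← hfg hy]; exact isometry_domRestrict_iff.1 h x hx y hy

end IsometryRestrict

section Paths

variable {X : Type*} [PseudoMetricSpace X] {γ : ℝ → X} {p q r : ℝ}

theorem Isometry.domRestrict_Icc_comp_add (h : Isometry ((Icc p q).domRestrict γ)) (c : ℝ) :
    Isometry ((Icc (p - c) (q - c)).domRestrict fun u ↦ γ (u + c)) := by
  refine isometry_domRestrict_iff.2 fun u hu v hv ↦ ?_
  have hu' : u + c ∈ Icc p q := ⟨by linarith [hu.1], by linarith [hu.2]⟩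
  have hv' : v + c ∈ Icc p q := ⟨by linarith [hv.1], by linarith [hv.2]⟩
  rw [isometry_domRestrict_iff.1 h _ hu' _ hv', Real.dist_eq, Real.dist_eq,
    add_sub_add_right_eq_sub]

theorem Isometry.domRestrict_Icc_union (hpq : p ≤ q) (hqr : q ≤ r)
    (h₁ : Isometry ((Icc p q).domRestrict γ)) (h₂ : Isometry ((Icc q r).domRestrict γ))
    (hpr : dist (γ p) (γ r) = r - p) : Isometry ((Icc p r).domRestrict γ) := by
  simp only [isometry_domRestrict_iff, Real.dist_eq] at h₁ h₂ ⊢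
  have mixed : ∀ u ∈ Icc p q, ∀ v ∈ Icc q r, dist (γ u) (γ v) = v - u := by
    intro u hu v hv
    have hq₁ := h₁ u hu q ⟨hpq, le_rfl⟩
    have hq₂ := h₂ q ⟨le_rfl, hqr⟩ v hv
    have hp := h₁ p ⟨le_rfl, hpq⟩ u hu
    have hr := h₂ v hv r ⟨hqr, le_rfl⟩
    rw [abs_of_nonpos (by linarith [hu.2])] at hq₁
    rw [abs_of_nonpos (by linarith [hv.1])] at hq₂
    rw [abs_of_nonpos (by linarith [hu.1])] at hp
    rw [abs_of_nonpos (by linarith [hv.2])] at hr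
    have upper := dist_triangle (γ u) (γ q) (γ v)
    have lower := dist_triangle4 (γ p) (γ u) (γ v) (γ r)
    linarith
  intro u hu v hv
  wlog huv : u ≤ v generalizing u v
  · rw [dist_comm, abs_sub_comm]; exact this v hv u hu (le_of_not_ge huv)
  rcases le_total v q with hvq | hqv
  · exact h₁ u ⟨hu.1, huv.trans hvq⟩ v ⟨hu.1.trans huv, hvq⟩
  rcases le_total q u with hqu | huq
  · exact h₂ u ⟨hqu, huv.trans hv.2⟩ v ⟨hqv, hv.2⟩
  rw [mixed u ⟨hu.1, huq⟩ v ⟨hqv, hv.2⟩, abs_sub_comm, abs_of_nonneg (sub_nonneg.2 huv)]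

end Paths

section Geodesic

variable {X : Type*} [MetricSpace X] {x y m : X}

theorem IsGeodesic.isometry {P : Icc (0 : ℝ) (dist x y) → X} (hP : IsGeodesic x y P) :
    Isometry P :=
  isometry_iff_dist_eq.2 fun a b ↦ by rw [hP.2.2, Subtype.dist_eq, Real.dist_eq]

theorem IsGeodesic.isometry_IccExtend {P : Icc (0 : ℝ) (dist x y) → X} (hP : IsGeodesic x y P) :
    Isometry ((Icc 0 (dist x y)).domRestrict (IccExtend dist_nonneg P)) := by
  convert hP.isometry
  exact funext (IccExtend_val dist_nonneg P)

theorem IsGeodesic.of_domRestrict {γ : ℝ → X} (h₀ : γ 0 = x) (h₁ : γ (dist x y) = y)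
    (hγ : Isometry ((Icc 0 (dist x y)).domRestrict γ)) :
    IsGeodesic x y ((Icc 0 (dist x y)).domRestrict γ) :=
  ⟨h₀, h₁, fun a b ↦ by rw [hγ.dist_eq, Subtype.dist_eq, Real.dist_eq]⟩

theorem IsGeodesic.dist_of_le {P : Icc (0 : ℝ) (dist x y) → X} (hP : IsGeodesic x y P)
    {a b : Icc (0 : ℝ) (dist x y)} (hab : a ≤ b) : dist (P a) (P b) = b - a := by
  rw [hP.2.2, abs_sub_comm]
  exact abs_of_nonneg (sub_nonneg.2 hab)

theorem IsGeodesic.dist_add_dist {P : Icc (0 : ℝ) (dist x y) → X} (hP : IsGeodesic x y P)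
    {a b c : Icc (0 : ℝ) (dist x y)} (hab : a ≤ b) (hbc : b ≤ c) :
    dist (P a) (P b) + dist (P b) (P c) = dist (P a) (P c) := by
  rw [hP.dist_of_le hab, hP.dist_of_le hbc, hP.dist_of_le (hab.trans hbc)]
  ring

noncomputable def geodesicSegment (P : Icc (0 : ℝ) (dist x y) → X) (a b : Icc (0 : ℝ) (dist x y)) :
    Icc 0 (dist (P a) (P b)) → X :=
  (Icc 0 (dist (P a) (P b))).domRestrict fun u ↦ IccExtend dist_nonneg P (u + a)

theorem IsGeodesic.segment {P : Icc (0 : ℝ) (dist x y) → X} (hP : IsGeodesic x y P)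
    {a b : Icc (0 : ℝ) (dist x y)} (hab : a ≤ b) :
    IsGeodesic (P a) (P b) (geodesicSegment P a b) := by
  have hlen := hP.dist_of_le hab
  refine IsGeodesic.of_domRestrict ?_ ?_ ?_
  · rw [zero_add, IccExtend_val]
  · rw [hlen, sub_add_cancel, IccExtend_val]
  · have hsub : Icc (a : ℝ) b ⊆ Icc 0 (dist x y) := Icc_subset_Icc a.2.1 b.2.2
    have := (hP.isometry_IccExtend.domRestrict_mono hsub).domRestrict_Icc_comp_add a
    rwa [sub_self, ← hlen] at this

/-- At the junction `dist x m` this takes the value of `Q₂`, so that `Q₂` can be read off on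
its whole domain. -/
noncomputable def concatPath (Q₁ : Icc (0 : ℝ) (dist x m) → X) (Q₂ : Icc (0 : ℝ) (dist m y) → X) :
    ℝ → X :=
  (Iio (dist x m)).piecewise (IccExtend dist_nonneg Q₁)
    fun u ↦ IccExtend dist_nonneg Q₂ (u - dist x m)

noncomputable def geodesicConcat (Q₁ : Icc (0 : ℝ) (dist x m) → X)
    (Q₂ : Icc (0 : ℝ) (dist m y) → X) : Icc 0 (dist x y) → X :=
  (Icc 0 (dist x y)).domRestrict (concatPath Q₁ Q₂)

theorem concatPath_eqOn_Iic {Q₁ : Icc (0 : ℝ) (dist x m) → X} {Q₂ : Icc (0 : ℝ) (dist m y) → X}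
    (h₁ : IsGeodesic x m Q₁) (h₂ : IsGeodesic m y Q₂) :
    EqOn (concatPath Q₁ Q₂) (IccExtend dist_nonneg Q₁) (Iic (dist x m)) := by
  intro u hu
  rcases (mem_Iic.1 hu).lt_or_eq with hlt | rfl
  · exact piecewise_eq_of_mem (Iio (dist x m)) _ _ hlt
  · rw [concatPath, piecewise_eq_of_notMem (Iio (dist x m)) _ _ (lt_irrefl (dist x m)),
      sub_self, IccExtend_left, IccExtend_right, h₁.2.1, h₂.1]

theorem concatPath_eqOn_Ici (Q₁ : Icc (0 : ℝ) (dist x m) → X) (Q₂ : Icc (0 : ℝ) (dist m y) → X) :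
    EqOn (concatPath Q₁ Q₂) (fun u ↦ IccExtend dist_nonneg Q₂ (u - dist x m)) (Ici (dist x m)) :=
  fun _ hu ↦ piecewise_eq_of_notMem _ _ _ (not_lt.2 (mem_Ici.1 hu))

theorem IsGeodesic.concat {Q₁ : Icc (0 : ℝ) (dist x m) → X}
    {Q₂ : Icc (0 : ℝ) (dist m y) → X} (h₁ : IsGeodesic x m Q₁) (h₂ : IsGeodesic m y Q₂)
    (hm : dist x m + dist m y = dist x y) : IsGeodesic x y (geodesicConcat Q₁ Q₂) := by
  have hd : 0 ≤ dist x m := dist_nonneg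
  have hdD : dist x m ≤ dist x y := hm ▸ le_add_of_nonneg_right dist_nonneg
  have eqOn₁ := concatPath_eqOn_Iic h₁ h₂
  have eqOn₂ := concatPath_eqOn_Ici Q₁ Q₂
  have h₀ : concatPath Q₁ Q₂ 0 = x := by rw [eqOn₁ (mem_Iic.2 hd), IccExtend_left, h₁.1]
  have hD : concatPath Q₁ Q₂ (dist x y) = y := by
    rw [eqOn₂ (mem_Ici.2 hdD), ← hm]
    dsimp only
    rw [add_sub_cancel_left, IccExtend_right, h₂.2.1]
  refine IsGeodesic.of_domRestrict h₀ hD (Isometry.domRestrict_Icc_union hd hdD ?_ ?_ ?_)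
  · exact h₁.isometry_IccExtend.domRestrict_congr (eqOn₁.mono Icc_subset_Iic_self).symm
  · have := h₂.isometry_IccExtend.domRestrict_Icc_comp_add (-dist x m)
    rw [zero_sub, neg_neg, sub_neg_eq_add, add_comm, hm] at this
    exact this.domRestrict_congr fun u hu ↦ (eqOn₂ (Icc_subset_Ici_self hu)).symm
  · rw [h₀, hD, sub_zero]

theorem geodesicConcat_right_injective (Q₁ : Icc (0 : ℝ) (dist x m) → X)
    (hm : dist x m + dist m y = dist x y) :
    Function.Injective (geodesicConcat (y := y) Q₁) := by
  intro Q₂ Q₂' h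
  funext v
  have hv : (v : ℝ) + dist x m ∈ Icc 0 (dist x y) :=
    ⟨add_nonneg v.2.1 dist_nonneg, hm ▸ by linarith [v.2.2]⟩
  have hjunction : dist x m ≤ v + dist x m := le_add_of_nonneg_left v.2.1
  simpa only [geodesicConcat, domRestrict_apply, concatPath_eqOn_Ici Q₁ _ hjunction,
    add_sub_cancel_right, IccExtend_val] using congrFun h ⟨v + dist x m, hv⟩

end Geodesic

/-- If `P` is a geodesic from `z` to `w` and `0 ≤ t < t' < s ≤ dist z w`, then the
set of geodesics from `P t'` to `P s` injects into the set of geodesics from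
`P t` to `P s`. -/
theorem geodesic_count_antitone {X : Type*} [MetricSpace X] (z w : X)
    (P : Set.Icc (0 : ℝ) (dist z w) → X) (hP : IsGeodesic z w P)
    (t t' s : ℝ) (h0 : 0 ≤ t) (h1 : t < t') (h2 : t' < s) (h3 : s ≤ dist z w) :
    ∃ f : {Q : Set.Icc (0 : ℝ)
              (dist (P ⟨t', Set.mem_Icc.mpr ⟨by linarith, by linarith⟩⟩)
                    (P ⟨s, Set.mem_Icc.mpr ⟨by linarith, h3⟩⟩)) → X //
            IsGeodesic (P ⟨t', Set.mem_Icc.mpr ⟨by linarith, by linarith⟩⟩)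
              (P ⟨s, Set.mem_Icc.mpr ⟨by linarith, h3⟩⟩) Q} →
        {Q : Set.Icc (0 : ℝ)
              (dist (P ⟨t, Set.mem_Icc.mpr ⟨h0, by linarith⟩⟩)
                    (P ⟨s, Set.mem_Icc.mpr ⟨by linarith, h3⟩⟩)) → X //
            IsGeodesic (P ⟨t, Set.mem_Icc.mpr ⟨h0, by linarith⟩⟩)
              (P ⟨s, Set.mem_Icc.mpr ⟨by linarith, h3⟩⟩) Q},
      Function.Injective f := by
  have ht : t ∈ Icc 0 (dist z w) := ⟨h0, by linarith⟩
  have ht' : t' ∈ Icc 0 (dist z w) := ⟨by linarith, by linarith⟩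
  have hs : s ∈ Icc 0 (dist z w) := ⟨by linarith, h3⟩
  have hm := hP.dist_add_dist (a := ⟨t, ht⟩) (b := ⟨t', ht'⟩) (c := ⟨s, hs⟩) h1.le h2.le
  have hseg := hP.segment (a := ⟨t, ht⟩) (b := ⟨t', ht'⟩) h1.le
  exact ⟨fun Q ↦ ⟨geodesicConcat (geodesicSegment P _ _) Q.1, hseg.concat Q.2 hm⟩,
    fun Q Q' h ↦ Subtype.ext (geodesicConcat_right_injective _ hm (congrArg Subtype.val h))⟩
end

section
/- Let (X, d) be a metric space, z, w ∈ X with z ≠ w, and let P, P' be two geodesics from z to w. Suppose b ∈ (0, d(z,w)) is such that P(b) = P'(b), and the set T = {t ∈ [b, d(z,w)] : P(t) ≠ P'(t)} has n connected components, each a nonempty open interval. Then there are at least 2^n distinct geodesics from P(b) to w. -/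
open Set Function

theorem Isometry.piecewise {α β : Type*} [PseudoMetricSpace α] [PseudoMetricSpace β]
    {f f' : α → β} (hf : Isometry f) (hf' : Isometry f')
    (hcross : ∀ s t, dist s t ≤ dist (f s) (f' t)) {U : Set α} [DecidablePred (· ∈ U)]
    (hU : ∀ s ∈ U, ∀ t ∉ U, ∃ m, f m = f' m ∧ dist s m + dist m t = dist s t) :
    Isometry (U.piecewise f' f) := by
  have hmixed : ∀ s ∈ U, ∀ t ∉ U, dist (f' s) (f t) = dist s t := by
    intro s hs t ht
    obtain ⟨m, hm, hsmt⟩ := hU s hs t ht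
    refine le_antisymm ?_ (dist_comm s t ▸ dist_comm (f t) (f' s) ▸ hcross t s)
    calc dist (f' s) (f t) ≤ dist (f' s) (f' m) + dist (f' m) (f t) := dist_triangle _ _ _
      _ = dist s t := by rw [hf'.dist_eq, ← hm, hf.dist_eq, hsmt]
  refine Isometry.of_dist_eq fun s t => ?_
  by_cases hs : s ∈ U <;> by_cases ht : t ∈ U <;>
    simp only [piecewise_eq_of_mem, piecewise_eq_of_notMem, hs, ht, not_false_eq_true]
  · exact hf'.dist_eq s t
  · exact hmixed s hs t ht
  · rw [dist_comm, hmixed t ht s hs, dist_comm]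
  · exact hf.dist_eq s t

theorem Real.dist_add_dist_of_mem_uIcc {s m t : ℝ} (h : m ∈ uIcc s t) :
    dist s m + dist m t = dist s t := by
  rw [← segment_eq_uIcc] at h
  exact dist_add_dist_of_mem_segment h

theorem exists_piecewise_biUnion_ne {α β ι : Type*} {V : ι → Set α}
    (hdisj : Pairwise (Disjoint on V)) {f f' : α → β} {x : ι → α} (hx : ∀ i, x i ∈ V i)
    (hne : ∀ i, f (x i) ≠ f' (x i)) {S S' : Finset ι} (hSS' : S ≠ S')
    [DecidablePred (· ∈ ⋃ j ∈ S, V j)] [DecidablePred (· ∈ ⋃ j ∈ S', V j)] :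
    ∃ i, (⋃ j ∈ S, V j).piecewise f' f (x i) ≠
      (⋃ j ∈ S', V j).piecewise f' f (x i) := by
  obtain ⟨i, hi⟩ : ∃ i, ¬(i ∈ S ↔ i ∈ S') := by
    by_contra! h
    exact hSS' (Finset.ext h)
  have hmem : ∀ T : Finset ι, x i ∈ ⋃ j ∈ T, V j ↔ i ∈ T := by
    intro T
    simp only [mem_iUnion, exists_prop]
    refine ⟨fun ⟨j, hj, hxj⟩ => ?_, fun h => ⟨i, h, hx i⟩⟩
    by_contra hji
    obtain rfl | hne := eq_or_ne j i
    · exact hji hj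
    · exact disjoint_left.mp (hdisj hne) hxj (hx i)
  refine ⟨i, ?_⟩
  simp only [piecewise]
  split_ifs with hS hS' hS'
  exacts [absurd (iff_of_true ((hmem S).1 hS) ((hmem S').1 hS')) hi, (hne i).symm, hne i,
    absurd (iff_of_false (mt (hmem S).2 hS) (mt (hmem S').2 hS')) hi]

namespace IsGeodesic

variable {X : Type*} [MetricSpace X] {x y : X} {P P' : Icc (0 : ℝ) (dist x y) → X}

theorem isometry_s9 (hP : IsGeodesic x y P) : Isometry P :=
  Isometry.of_dist_eq fun s t => by rw [hP.2.2, Subtype.dist_eq, Real.dist_eq]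

theorem dist_left (hP : IsGeodesic x y P) (t : Icc (0 : ℝ) (dist x y)) : dist x (P t) = t := by
  have h := hP.2.2 ⟨0, left_mem_Icc.2 dist_nonneg⟩ t
  rwa [hP.1, zero_sub, abs_neg, abs_of_nonneg t.2.1] at h

theorem dist_right (hP : IsGeodesic x y P) (t : Icc (0 : ℝ) (dist x y)) :
    dist (P t) y = dist x y - t := by
  have h := hP.2.2 t ⟨dist x y, right_mem_Icc.2 dist_nonneg⟩
  rwa [hP.2.1, abs_sub_comm, abs_of_nonneg (sub_nonneg.2 t.2.2)] at h

theorem dist_le_dist (hP : IsGeodesic x y P) (hP' : IsGeodesic x y P')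
    (s t : Icc (0 : ℝ) (dist x y)) : dist s t ≤ dist (P s) (P' t) := by
  calc dist s t = |dist x (P s) - dist x (P' t)| := by
        rw [hP.dist_left, hP'.dist_left, Subtype.dist_eq, Real.dist_eq]
    _ ≤ dist (P s) (P' t) := by
        simpa only [dist_comm x] using abs_dist_sub_le (P s) (P' t) x

theorem piecewise (hP : IsGeodesic x y P) (hP' : IsGeodesic x y P')
    {U : Set (Icc (0 : ℝ) (dist x y))} [DecidablePred (· ∈ U)]
    (hU : ∀ s ∈ U, ∀ t ∉ U, ∃ m, P m = P' m ∧ dist s m + dist m t = dist s t) :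
    IsGeodesic x y (U.piecewise P' P) := by
  have hiso := hP.isometry_s9.piecewise hP'.isometry_s9 (hP.dist_le_dist hP') hU
  refine ⟨?_, ?_, fun s t => by rw [hiso.dist_eq, Subtype.dist_eq, Real.dist_eq]⟩
  · by_cases h : ⟨0, left_mem_Icc.2 dist_nonneg⟩ ∈ U <;> simp [h, hP.1, hP'.1]
  · by_cases h : ⟨dist x y, right_mem_Icc.2 dist_nonneg⟩ ∈ U <;> simp [h, hP.2.1, hP'.2.1]

theorem piecewise_biUnion_Ioo (hP : IsGeodesic x y P) (hP' : IsGeodesic x y P') {ι : Type*}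
    {a c : ι → ℝ}
    (hagree : ∀ t : Icc (0 : ℝ) (dist x y), (∃ i, t.1 = a i ∨ t.1 = c i) → P t = P' t)
    (S : Finset ι)
    [DecidablePred (· ∈ ⋃ i ∈ S, {t : Icc (0 : ℝ) (dist x y) | t.1 ∈ Ioo (a i) (c i)})] :
    IsGeodesic x y
      ((⋃ i ∈ S, {t : Icc (0 : ℝ) (dist x y) | t.1 ∈ Ioo (a i) (c i)}).piecewise P' P) := by
  refine hP.piecewise hP' fun s hs t ht => ?_
  simp only [mem_iUnion, mem_ofPred_eq, exists_prop, not_exists, not_and] at hs ht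
  obtain ⟨i, hiS, hsa, hsc⟩ := hs
  rcases le_or_gt t.1 (a i) with hta | hat
  · refine ⟨⟨a i, t.2.1.trans hta, hsa.le.trans s.2.2⟩, hagree _ ⟨i, .inl rfl⟩, ?_⟩
    exact Real.dist_add_dist_of_mem_uIcc (mem_uIcc.2 (.inr ⟨hta, hsa.le⟩))
  · have hct : c i ≤ t.1 := not_lt.1 fun htc => ht i hiS ⟨hat, htc⟩
    refine ⟨⟨c i, s.2.1.trans hsc.le, hct.trans t.2.2⟩, hagree _ ⟨i, .inr rfl⟩, ?_⟩
    exact Real.dist_add_dist_of_mem_uIcc (mem_uIcc.2 (.inl ⟨hsc.le, hct⟩))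

end IsGeodesic

section Tail

variable {X : Type*} [MetricSpace X] {x y : X}

-- `IccExtend` clamps `b + t` into `[0, dist x y]`; only `t ∈ [0, dist x y - b]` is meaningful.
noncomputable def tailFrom (P : Icc (0 : ℝ) (dist x y) → X) (b L : ℝ) :
    Icc (0 : ℝ) L → X :=
  fun t => IccExtend dist_nonneg P (b + t)

theorem tailFrom_apply (P : Icc (0 : ℝ) (dist x y) → X) {b L : ℝ} (t : Icc (0 : ℝ) L)
    (h : b + t ∈ Icc 0 (dist x y)) : tailFrom P b L t = P ⟨b + t, h⟩ :=
  IccExtend_of_mem _ _ h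

theorem tailFrom_apply_sub (P : Icc (0 : ℝ) (dist x y) → X) {b L : ℝ}
    (t : Icc (0 : ℝ) (dist x y)) (h : t.1 - b ∈ Icc 0 L) :
    tailFrom P b L ⟨t - b, h⟩ = P t := by
  rw [tailFrom_apply _ _ (by simp [t.2])]
  simp

theorem eq_of_tailFrom_eq {Q Q' : Icc (0 : ℝ) (dist x y) → X} {b L : ℝ}
    (hL : dist x y ≤ b + L) (h : tailFrom Q b L = tailFrom Q' b L) {t : Icc (0 : ℝ) (dist x y)}
    (hbt : b ≤ t) : Q t = Q' t := by
  have hmem : t.1 - b ∈ Icc 0 L := ⟨sub_nonneg.2 hbt, by linarith [t.2.2]⟩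
  rw [← tailFrom_apply_sub Q t hmem, ← tailFrom_apply_sub Q' t hmem, h]

theorem IsGeodesic.tailFrom {P : Icc (0 : ℝ) (dist x y) → X} (hP : IsGeodesic x y P) {b : ℝ}
    (hb : b ∈ Icc 0 (dist x y)) {p : X} (hp : P ⟨b, hb⟩ = p) :
    IsGeodesic p y (tailFrom P b (dist p y)) := by
  have hL : dist p y = dist x y - b := hp ▸ hP.dist_right ⟨b, hb⟩
  have hmem : ∀ t : Icc (0 : ℝ) (dist p y), b + t ∈ Icc 0 (dist x y) := fun t => by
    have ht : (t : ℝ) ≤ dist x y - b := hL ▸ t.2.2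
    exact ⟨by linarith [hb.1, t.2.1], by linarith⟩
  refine ⟨?_, ?_, fun s t => ?_⟩
  · rw [tailFrom_apply _ _ (hmem _)]
    simpa using hp
  · rw [tailFrom_apply _ _ (hmem _)]
    convert hP.2.1 using 3
    simp [hL]
  · rw [tailFrom_apply _ _ (hmem s), tailFrom_apply _ _ (hmem t), hP.2.2]
    congr 1
    ring

end Tail

theorem notMem_iUnion_Ioo_of_endpoint {ι : Type*} {a c : ι → ℝ} (hac : ∀ i, a i < c i)
    (hdisj : Pairwise (Disjoint on fun i => Ioo (a i) (c i))) {r : ℝ}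
    (hr : ∃ i, r = a i ∨ r = c i) : r ∉ ⋃ j, Ioo (a j) (c j) := by
  obtain ⟨i, hri⟩ := hr
  simp only [mem_iUnion, not_exists]
  intro j hj
  obtain rfl | hij := eq_or_ne i j
  · rcases hri with rfl | rfl
    exacts [lt_irrefl _ hj.1, lt_irrefl _ hj.2]
  · have h := Ioo_disjoint_Ioo.1 (hdisj hij)
    rw [min_le_iff, le_max_iff, le_max_iff] at h
    rcases hri with rfl | rfl <;> rcases h with (h | h) | (h | h) <;> linarith [hac i, hj.1, hj.2]

section Excursions

variable {X : Type*} {D b : ℝ} {P P' : Icc (0 : ℝ) D → X} {ι : Type*} {a c : ι → ℝ}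

def divergenceSet (P P' : Icc (0 : ℝ) D → X) (b : ℝ) : Set ℝ :=
  {r | ∃ h : r ∈ Icc (0 : ℝ) D, b ≤ r ∧ P ⟨r, h⟩ ≠ P' ⟨r, h⟩}

theorem excursion_subset (hT : divergenceSet P P' b = ⋃ i, Ioo (a i) (c i)) {i : ι}
    (hac : a i < c i) : b ≤ a i ∧ c i ≤ D := by
  have hsub : Ioo (a i) (c i) ⊆ Icc b D := fun r hr => by
    obtain ⟨h, hbr, -⟩ : r ∈ divergenceSet P P' b := hT ▸ mem_iUnion_of_mem i hr
    exact ⟨hbr, h.2⟩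
  rw [← Icc_subset_Icc_iff hac.le, ← closure_Ioo hac.ne]
  exact isClosed_Icc.closure_subset_iff.2 hsub

theorem eq_at_excursion_endpoint
    (hT : divergenceSet P P' b = ⋃ i, Ioo (a i) (c i)) (hac : ∀ i, a i < c i)
    (hdisj : Pairwise (Disjoint on fun i => Ioo (a i) (c i))) (t : Icc (0 : ℝ) D)
    (ht : ∃ i, t.1 = a i ∨ t.1 = c i) : P t = P' t := by
  have hbt : b ≤ t := by
    obtain ⟨i, hi | hi⟩ := ht <;> linarith [excursion_subset hT (hac i), hac i]
  have hnotin := notMem_iUnion_Ioo_of_endpoint hac hdisj ht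
  rw [← hT] at hnotin
  by_contra hne
  exact hnotin ⟨t.2, hbt, hne⟩

theorem exists_ne_of_excursion
    (hT : divergenceSet P P' b = ⋃ i, Ioo (a i) (c i)) {i : ι} (hac : a i < c i) :
    ∃ t : Icc (0 : ℝ) D, t.1 ∈ Ioo (a i) (c i) ∧ P t ≠ P' t := by
  obtain ⟨r, hr⟩ := nonempty_Ioo.2 hac
  obtain ⟨h, -, hne⟩ : r ∈ divergenceSet P P' b := hT ▸ mem_iUnion_of_mem i hr
  exact ⟨⟨r, h⟩, hr, hne⟩

end Excursions

theorem geodesics_from_excursions_general {X : Type*} [MetricSpace X] (z w : X)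
    (P P' : Set.Icc (0 : ℝ) (dist z w) → X)
    (hP : IsGeodesic z w P) (hP' : IsGeodesic z w P')
    (b : ℝ) (hb0 : 0 < b) (hbd : b < dist z w)
    (n : ℕ) (a c : Fin n → ℝ) (hac : ∀ i, a i < c i)
    (hdisj : ∀ i j, i ≠ j →
      Disjoint (Set.Ioo (a i) (c i)) (Set.Ioo (a j) (c j)))
    (hT : {r : ℝ | ∃ h : r ∈ Set.Icc (0 : ℝ) (dist z w),
        b ≤ r ∧ P ⟨r, h⟩ ≠ P' ⟨r, h⟩} = ⋃ i, Set.Ioo (a i) (c i)) :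
    ∃ f : Fin (2 ^ n) →
        {Q : Set.Icc (0 : ℝ)
            (dist (P ⟨b, Set.mem_Icc.mpr ⟨le_of_lt hb0, le_of_lt hbd⟩⟩) w) → X //
          IsGeodesic (P ⟨b, Set.mem_Icc.mpr ⟨le_of_lt hb0, le_of_lt hbd⟩⟩) w Q},
      Function.Injective f := by
  classical
  have hb : b ∈ Icc 0 (dist z w) := ⟨hb0.le, hbd.le⟩
  have hdisj' : Pairwise (Disjoint on fun i => Ioo (a i) (c i)) := fun i j => hdisj i j
  have hbound := fun i => excursion_subset hT (hac i)
  let V i := {t : Icc (0 : ℝ) (dist z w) | t.1 ∈ Ioo (a i) (c i)}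
  let σ (S : Finset (Fin n)) := (⋃ i ∈ S, V i).piecewise P' P
  have hσ S : IsGeodesic z w (σ S) :=
    hP.piecewise_biUnion_Ioo hP' (eq_at_excursion_endpoint hT hac hdisj') S
  have hσb S : σ S ⟨b, hb⟩ = P ⟨b, hb⟩ := piecewise_eq_of_notMem _ _ _ <| by
    simp only [V, mem_iUnion, mem_ofPred_eq, not_exists]
    exact fun i _ hi => not_lt.2 (hbound i).1 hi.1
  let Q S := tailFrom (σ S) b (dist (P ⟨b, hb⟩) w)
  have hinj : Injective Q := fun S S' hQ => by
    by_contra hSS'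
    choose x hx hxne using fun i => exists_ne_of_excursion hT (hac i)
    obtain ⟨i, hi⟩ := exists_piecewise_biUnion_ne
      (fun i j hij => (hdisj' hij).preimage Subtype.val) hx hxne hSS'
    refine hi (eq_of_tailFrom_eq ?_ hQ (by linarith [(hbound i).1, (hx i).1]))
    rw [hP.dist_right, add_sub_cancel]
  let e : Fin (2 ^ n) ≃ Finset (Fin n) := (Fintype.equivFinOfCardEq (by simp)).symm
  exact ⟨fun k => ⟨Q (e k), (hσ _).tailFrom hb (hσb _)⟩,
    fun k k' h => e.injective (hinj (congrArg Subtype.val h))⟩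

/-- Let `P, P'` be geodesics from `z` to `w`, let `b ∈ (0, dist z w)` with
`P b = P' b`, and suppose the set `T = {t ∈ [b, dist z w] : P t ≠ P' t}` is the
disjoint union of `n` nonempty open intervals. Then there are at least `2^n`
distinct geodesics from `P b` to `w`. -/
theorem geodesics_from_excursions {X : Type*} [MetricSpace X] (z w : X)
    (hzw : z ≠ w)
    (P P' : Set.Icc (0 : ℝ) (dist z w) → X)
    (hP : IsGeodesic z w P) (hP' : IsGeodesic z w P')
    (b : ℝ) (hb0 : 0 < b) (hbd : b < dist z w)
    (hmeet : P ⟨b, Set.mem_Icc.mpr ⟨le_of_lt hb0, le_of_lt hbd⟩⟩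
      = P' ⟨b, Set.mem_Icc.mpr ⟨le_of_lt hb0, le_of_lt hbd⟩⟩)
    (n : ℕ) (a c : Fin n → ℝ) (hac : ∀ i, a i < c i)
    (hdisj : ∀ i j, i ≠ j →
      Disjoint (Set.Ioo (a i) (c i)) (Set.Ioo (a j) (c j)))
    (hT : {r : ℝ | ∃ h : r ∈ Set.Icc (0 : ℝ) (dist z w),
        b ≤ r ∧ P ⟨r, h⟩ ≠ P' ⟨r, h⟩} = ⋃ i, Set.Ioo (a i) (c i)) :
    ∃ f : Fin (2 ^ n) →
        {Q : Set.Icc (0 : ℝ)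
            (dist (P ⟨b, Set.mem_Icc.mpr ⟨le_of_lt hb0, le_of_lt hbd⟩⟩) w) → X //
          IsGeodesic (P ⟨b, Set.mem_Icc.mpr ⟨le_of_lt hb0, le_of_lt hbd⟩⟩) w Q},
      Function.Injective f :=
  geodesics_from_excursions_general z w P P' hP hP' b hb0 hbd n a c hac hdisj hT
end
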